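/- arXiv:1104.1135 — 5 statements merged into one kernel-verified Lean document; each statement's English description precedes it below -/
import Mathlib

section
/- Let M be a finite set of vectors in 𝔽₂^n that contains a basis of 𝔽₂^n, and suppose every vector of M has at most r nonzero coordinates. If k ≥ 1 is an integer and n ≥ r(k-1)+1, then there exists a subset K ⊆ M of k vectors such that K is M-sum-free. -/
open scoped Classical BigOperators

/-!
Since `M` spans `𝔽₂ⁿ`, the all-ones vector is the sum of some subset of `M`; take such a subset
`K` of minimal size. If a subset `T ⊆ K` with `|T| ≥ 2` summed to some `m ∈ M`, then replacing
`T` by `m` (or, if `m` already lies in `K \ T`, deleting `m` as well) would give a smaller subset of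
`M` with the same sum, so `K` is `M`-sum-free. Every coordinate is `1` in the sum of `K`, so the
supports of the vectors of `K` cover all `n` coordinates, whence `n ≤ r |K|` and `|K| ≥ k`.
-/

open Finset

section SumFree

variable {V : Type*} [AddCommGroup V]

def IsSumFree (M K : Finset V) : Prop :=
  ∀ T ⊆ K, 2 ≤ #T → ∑ v ∈ T, v ∉ M

theorem IsSumFree.mono {M K K' : Finset V} (hK : IsSumFree M K) (hK' : K' ⊆ K) :
    IsSumFree M K' :=
  fun T hT => hK T (hT.trans hK')

variable [Module (ZMod 2) V]

theorem exists_subset_sum_eq_of_mem_span {M : Finset V} {x : V}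
    (hx : x ∈ Submodule.span (ZMod 2) (M : Set V)) : ∃ K ⊆ M, ∑ v ∈ K, v = x := by
  obtain ⟨f, -, rfl⟩ := Submodule.mem_span_finset.1 hx
  refine ⟨M.filter (f · ≠ 0), filter_subset _ _, ?_⟩
  rw [sum_filter]
  refine sum_congr rfl fun v _ => ?_
  obtain hf | hf : f v = 0 ∨ f v = 1 := by generalize f v = a; revert a; decide
  all_goals simp [hf]

theorem isSumFree_of_forall_card_le {M K : Finset V} {x : V} (hKM : K ⊆ M) (hK : ∑ v ∈ K, v = x)
    (hmin : ∀ K' ⊆ M, ∑ v ∈ K', v = x → #K ≤ #K') : IsSumFree M K := by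
  intro T hTK hT hsM
  set s := ∑ v ∈ T, v
  have hrest : ∑ v ∈ K \ T, v = x + s := by
    rw [← hK, ← sum_sdiff hTK, add_assoc, ZModModule.add_self, add_zero]
  have hcard : #(K \ T) + 2 ≤ #K := by
    have := card_sdiff_add_card_eq_card hTK
    omega
  by_cases hs : s ∈ K \ T
  · have hsum : ∑ v ∈ (K \ T).erase s, v = x := by
      rw [← add_left_inj s, sum_erase_add _ _ hs, hrest]
    have hsub : (K \ T).erase s ⊆ M := (erase_subset _ _).trans (sdiff_subset.trans hKM)
    have := hmin _ hsub hsum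
    have := card_erase_le (s := K \ T) (a := s)
    omega
  · have hsub : insert s (K \ T) ⊆ M := insert_subset hsM (sdiff_subset.trans hKM)
    have hsum : ∑ v ∈ insert s (K \ T), v = x := by
      rw [sum_insert hs, hrest, add_left_comm, ZModModule.add_self, add_zero]
    have := hmin _ hsub hsum
    have := card_insert_le s (K \ T)
    omega

theorem exists_isSumFree_subset_sum_eq {M : Finset V} {x : V}
    (hx : x ∈ Submodule.span (ZMod 2) (M : Set V)) :
    ∃ K ⊆ M, ∑ v ∈ K, v = x ∧ IsSumFree M K := by
  obtain ⟨K₀, hK₀⟩ := exists_subset_sum_eq_of_mem_span hx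
  obtain ⟨K, hK, hmin⟩ := exists_min_image (M.powerset.filter fun K => ∑ v ∈ K, v = x) card
    ⟨K₀, by simpa using hK₀⟩
  simp only [mem_filter, mem_powerset] at hK hmin
  exact ⟨K, hK.1, hK.2, isSumFree_of_forall_card_le hK.1 hK.2 fun K' h₁ h₂ => hmin K' ⟨h₁, h₂⟩⟩

end SumFree

theorem card_le_sum_card_support {ι R : Type*} [Fintype ι] [AddCommMonoid R] [DecidableEq R]
    (K : Finset (ι → R)) (hK : ∀ i, ∑ v ∈ K, v i ≠ 0) :
    Fintype.card ι ≤ ∑ v ∈ K, #(univ.filter fun i => v i ≠ 0) := by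
  have hcover : univ ⊆ K.biUnion fun v => univ.filter fun i => v i ≠ 0 := fun i _ => by
    obtain ⟨v, hv, hvi⟩ := exists_ne_zero_of_sum_ne_zero (hK i)
    exact mem_biUnion.2 ⟨v, hv, by simpa using hvi⟩
  exact (card_le_card hcover).trans card_biUnion_le

theorem stmt4_general (n r k : ℕ) (hn : r * (k - 1) + 1 ≤ n)
    (M : Finset (Fin n → ZMod 2))
    (hspan : Submodule.span (ZMod 2) (M : Set (Fin n → ZMod 2)) = ⊤)
    (hr : ∀ v ∈ M, (Finset.univ.filter fun i => v i ≠ 0).card ≤ r) :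
    ∃ K ⊆ M, K.card = k ∧ ∀ T ⊆ K, 2 ≤ T.card → (∑ v ∈ T, v) ∉ M := by
  obtain ⟨K, hKM, hKsum, hKfree⟩ :=
    exists_isSumFree_subset_sum_eq (x := 1) (hspan ▸ Submodule.mem_top)
  have hcover : n ≤ r * #K :=
    calc n = Fintype.card (Fin n) := (Fintype.card_fin n).symm
      _ ≤ ∑ v ∈ K, #(univ.filter fun i => v i ≠ 0) :=
        card_le_sum_card_support K fun i => by simp [← Finset.sum_apply, hKsum]
      _ ≤ ∑ _v ∈ K, r := sum_le_sum fun v hv => hr v (hKM hv)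
      _ = r * #K := by rw [sum_const, smul_eq_mul, mul_comm]
  have hk : k ≤ #K := by
    have := Nat.lt_of_mul_lt_mul_left (a := r) (by omega : r * (k - 1) < r * #K)
    omega
  obtain ⟨K', hK'K, hK'card⟩ := exists_subset_card_eq hk
  exact ⟨K', hK'K.trans hKM, hK'card, hKfree.mono hK'K⟩

/-- If `M ⊆ 𝔽₂ⁿ` contains a basis, each vector of `M` has at most `r` nonzero
coordinates, `k ≥ 1` and `n ≥ r(k-1)+1`, then `M` has an `M`-sum-free subset of
size `k`. -/
theorem stmt4 (n r k : ℕ) (hk : 1 ≤ k) (hn : r * (k - 1) + 1 ≤ n)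
    (M : Finset (Fin n → ZMod 2))
    (hspan : Submodule.span (ZMod 2) (M : Set (Fin n → ZMod 2)) = ⊤)
    (hr : ∀ v ∈ M, (Finset.univ.filter fun i => v i ≠ 0).card ≤ r) :
    ∃ K ⊆ M, K.card = k ∧ ∀ T ⊆ K, 2 ≤ T.card → (∑ v ∈ T, v) ∉ M :=
  stmt4_general n r k hn M hspan hr
end

section
/- For every integers r ≥ 1, k ≥ 2 and n = r(k-1), there exists an irreducible system S of equations each with at most r variables, all weights 1, on n variables, whose maximum excess is exactly k-1. Concretely, partition [n] into k-1 sets N_1,...,N_{k-1} of size r and take the equations ∏_{i∈I} x_i = -1 of weight 1 for every nonempty I ⊆ N_t, t ∈ [k-1]; this system has maximum excess k-1. -/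
open scoped Classical BigOperators

/-!
Expanding `∏_{i ∈ N_t} (1 + x_i)` shows that the excess of block `t` is `1 - ∏_{i ∈ N_t} (1 + x_i)`.
For `x ∈ {-1, 1}^n` the product is nonnegative, so each of the `k - 1` blocks contributes at most
`1`, and the all-`(-1)` assignment kills every product, since the blocks are nonempty.
-/

namespace Finset

variable {ι R : Type*} [DecidableEq ι]

theorem sum_powerset_erase_empty_neg_prod [CommRing R] (s : Finset ι) (x : ι → R) :
    ∑ I ∈ s.powerset.erase ∅, -∏ i ∈ I, x i = 1 - ∏ i ∈ s, (x i + 1) := by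
  rw [prod_add_one, ← sum_erase_add _ _ (empty_mem_powerset s), sum_neg_distrib, prod_empty]
  ring

theorem sum_powerset_erase_empty_neg_prod_le_one [CommRing R] [PartialOrder R]
    [IsOrderedRing R] (s : Finset ι) {x : ι → R} (hx : ∀ i ∈ s, -1 ≤ x i) :
    ∑ I ∈ s.powerset.erase ∅, -∏ i ∈ I, x i ≤ 1 := by
  rw [sum_powerset_erase_empty_neg_prod, sub_le_self_iff]
  exact prod_nonneg fun i hi => neg_le_iff_add_nonneg.mp (hx i hi)

theorem sum_powerset_erase_empty_neg_prod_eq_one [CommRing R] {s : Finset ι} {x : ι → R}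
    {a : ι} (ha : a ∈ s) (hxa : x a = -1) :
    ∑ I ∈ s.powerset.erase ∅, -∏ i ∈ I, x i = 1 := by
  rw [sum_powerset_erase_empty_neg_prod, prod_eq_zero ha (by rw [hxa, neg_add_cancel]), sub_zero]

end Finset

theorem stmt9_general (r k : ℕ) (hr : 1 ≤ r) (hk : 2 ≤ k) (n : ℕ)
    (N : Fin (k - 1) → Finset (Fin n))
    (hcard : ∀ t, (N t).card = r) :
    (∀ x : Fin n → ℝ, (∀ i, x i = 1 ∨ x i = -1) →
        ∑ t, ∑ I ∈ (N t).powerset.erase ∅, -(∏ i ∈ I, x i) ≤ (k : ℝ) - 1) ∧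
    (∃ x : Fin n → ℝ, (∀ i, x i = 1 ∨ x i = -1) ∧
        ∑ t, ∑ I ∈ (N t).powerset.erase ∅, -(∏ i ∈ I, x i) = (k : ℝ) - 1) := by
  have hblocks : ∑ _t : Fin (k - 1), (1 : ℝ) = k - 1 := by
    rw [Finset.sum_const, Finset.card_univ, Fintype.card_fin, nsmul_one, Nat.cast_sub (by omega), Nat.cast_one]
  refine ⟨fun x hx => ?_, fun _ => -1, fun _ => Or.inr rfl, ?_⟩
  · rw [← hblocks]
    refine Finset.sum_le_sum fun t _ => Finset.sum_powerset_erase_empty_neg_prod_le_one _ ?_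
    intro i _
    rcases hx i with h | h <;> norm_num [h]
  · rw [← hblocks]
    refine Finset.sum_congr rfl fun t _ => ?_
    obtain ⟨a, ha⟩ := Finset.card_pos.mp (by rw [hcard t]; exact hr)
    exact Finset.sum_powerset_erase_empty_neg_prod_eq_one ha rfl

/-- Sharpness example: with `n = r(k-1)` and `[n]` partitioned into `k-1` sets of
size `r`, the system of all equations `∏_{i∈I} x_i = -1` for `∅ ≠ I ⊆ N_t` has
maximum excess exactly `k-1`. -/
theorem stmt9 (r k : ℕ) (hr : 1 ≤ r) (hk : 2 ≤ k) (n : ℕ) (hn : n = r * (k - 1))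
    (N : Fin (k - 1) → Finset (Fin n))
    (hcard : ∀ t, (N t).card = r)
    (hdisj : ∀ t t', t ≠ t' → Disjoint (N t) (N t'))
    (hcover : Finset.univ.biUnion N = Finset.univ) :
    (∀ x : Fin n → ℝ, (∀ i, x i = 1 ∨ x i = -1) →
        ∑ t, ∑ I ∈ (N t).powerset.erase ∅, -(∏ i ∈ I, x i) ≤ (k : ℝ) - 1) ∧
    (∃ x : Fin n → ℝ, (∀ i, x i = 1 ∨ x i = -1) ∧
        ∑ t, ∑ I ∈ (N t).powerset.erase ∅, -(∏ i ∈ I, x i) = (k : ℝ) - 1) :=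
  stmt9_general r k hr hk n N hcard
end

section
/- Every connected graph G with n vertices and m edges contains a bipartite subgraph with at least m/2 + (n-1)/4 edges. Equivalently, there is a 2-coloring c : V → {-1,1} such that the number of edges uv with c(u) ≠ c(v) is at least m/2 + (n-1)/4. -/
/-!
Induction over connected vertex sets `s`, with the integral form `2 e(s) + |s| ≤ 4 cut(s) + 1`
of the bound. Fix a root and its BFS levels inside `s`. Deleting vertices of the top level keeps
`s` connected, since every other vertex has a neighbour one level closer to the root. If some top
vertex `x` has odd degree, delete it and give it the colour opposite to the majority of its
neighbours: at least `(deg x + 1) / 2` of its edges are cut. If two top vertices are adjacent,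
delete both. Otherwise every top vertex has even, hence at least two, neighbours, all on lower
levels; deleting a top vertex `x` together with its parent `u` then keeps `s` connected, and
colouring `x` and `u` differently, with the pair of colours chosen against the majority of their
remaining neighbours, cuts `xu` and half of their other edges.
-/

open scoped Classical

open Finset

namespace SimpleGraph

variable {V : Type*} (G : SimpleGraph V)

def restrict (s : Finset V) : SimpleGraph V where
  Adj u v := G.Adj u v ∧ u ∈ s ∧ v ∈ s
  symm := ⟨fun _ _ h => ⟨h.1.symm, h.2.2, h.2.1⟩⟩
  loopless := ⟨fun _ h => G.irrefl h.1⟩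

@[simp]
lemma restrict_adj {s : Finset V} {u v : V} :
    (G.restrict s).Adj u v ↔ G.Adj u v ∧ u ∈ s ∧ v ∈ s := Iff.rfl

def ConnectedOn (s : Finset V) : Prop :=
  ∀ a ∈ s, ∀ b ∈ s, (G.restrict s).Reachable a b

def cutGraph {α : Type*} (c : V → α) : SimpleGraph V :=
  G ⊓ (⊤ : SimpleGraph α).comap c

@[simp]
lemma cutGraph_adj {α : Type*} {c : V → α} {u v : V} :
    (G.cutGraph c).Adj u v ↔ G.Adj u v ∧ c u ≠ c v := Iff.rfl

lemma cutGraph_comp {α β : Type*} {g : α → β} (hg : Function.Injective g) (c : V → α) :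
    G.cutGraph (g ∘ c) = G.cutGraph c := by
  ext; simp [hg.ne_iff]

lemma restrict_cutGraph_congr {α : Type*} {c c' : V → α} {s : Finset V}
    (h : ∀ v ∈ s, c' v = c v) : (G.cutGraph c').restrict s = (G.cutGraph c).restrict s := by
  ext u v
  simp only [restrict_adj, cutGraph_adj]
  constructor
  · rintro ⟨⟨hadj, hc⟩, hu, hv⟩
    exact ⟨⟨hadj, by rwa [← h u hu, ← h v hv]⟩, hu, hv⟩
  · rintro ⟨⟨hadj, hc⟩, hu, hv⟩
    exact ⟨⟨hadj, by rwa [h u hu, h v hv]⟩, hu, hv⟩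

lemma filter_cutGraph_adj {α : Type*} [DecidableEq α] {c c' : V → α} {s : Finset V} (x : V)
    (h : ∀ v ∈ s, c' v = c v) :
    {y ∈ s | (G.cutGraph c').Adj x y} = {y ∈ {y ∈ s | G.Adj x y} | c' x ≠ c y} := by
  ext y
  simp only [mem_filter, cutGraph_adj]
  constructor
  · rintro ⟨hy, hadj, hc⟩
    exact ⟨⟨hy, hadj⟩, by rwa [← h y hy]⟩
  · rintro ⟨⟨hy, hadj⟩, hc⟩
    exact ⟨hy, hadj, by rwa [h y hy]⟩

lemma connectedOn_of_forall_exists_adj_lt {t : Finset V} (r : V) (f : V → ℕ)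
    (h : ∀ z ∈ t, z ≠ r → ∃ w ∈ t, G.Adj z w ∧ f w < f z) : G.ConnectedOn t := by
  have reach (n : ℕ) : ∀ z ∈ t, f z = n → (G.restrict t).Reachable z r := by
    induction n using Nat.strong_induction_on with
    | _ n ih =>
      intro z hz hzn
      by_cases hzr : z = r
      · exact hzr ▸ Reachable.refl _
      · obtain ⟨w, hw, hadj, hlt⟩ := h z hz hzr
        have hzw : (G.restrict t).Adj z w := ⟨hadj, hz, hw⟩
        exact hzw.reachable.trans (ih _ (hzn ▸ hlt) w hw rfl)
  intro a ha b hb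
  exact (reach _ a ha rfl).trans (reach _ b hb rfl).symm

variable {G}

lemma Reachable.exists_adj_dist_add_one {z r : V} (h : G.Reachable z r) (hz : z ≠ r) :
    ∃ w, G.Adj z w ∧ G.dist w r + 1 = G.dist z r := by
  obtain ⟨p, hp⟩ := h.exists_walk_length_eq_dist
  cases p with
  | nil => exact absurd rfl hz
  | cons hadj q =>
    obtain ⟨q', hq'⟩ := q.reachable.exists_walk_length_eq_dist
    refine ⟨_, hadj, le_antisymm ?_ ?_⟩
    · rw [← hp, Walk.length_cons]
      exact Nat.add_le_add_right (dist_le q) 1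
    · rw [← hq']
      exact dist_le (Walk.cons hadj q')

lemma ConnectedOn.exists_adj_dist_add_one {s : Finset V} (hs : G.ConnectedOn s) {z r : V}
    (hz : z ∈ s) (hr : r ∈ s) (hzr : z ≠ r) :
    ∃ w ∈ s, G.Adj z w ∧ (G.restrict s).dist w r + 1 = (G.restrict s).dist z r := by
  obtain ⟨w, ⟨hadj, -, hw⟩, hdist⟩ := (hs z hz r hr).exists_adj_dist_add_one hzr
  exact ⟨w, hw, hadj, hdist⟩

section Levels

variable {s : Finset V} {r : V} {f : V → ℕ} {D : ℕ}

lemma connectedOn_sdiff_of_forall_eq_max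
    (hpred : ∀ z ∈ s, z ≠ r → ∃ w ∈ s, G.Adj z w ∧ f w + 1 = f z)
    (hD : ∀ z ∈ s, f z ≤ D)
    {T : Finset V} (hT : ∀ z ∈ T, f z = D) : G.ConnectedOn (s \ T) := by
  refine G.connectedOn_of_forall_exists_adj_lt r f fun z hz hzr => ?_
  obtain ⟨hzs, -⟩ := mem_sdiff.1 hz
  obtain ⟨w, hw, hadj, hfw⟩ := hpred z hzs hzr
  have hzD := hD z hzs
  refine ⟨w, mem_sdiff.2 ⟨hw, fun hwT => ?_⟩, hadj, by omega⟩
  have := hT w hwT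
  omega

lemma connectedOn_sdiff_pair_of_forall_eq_max
    (hpred : ∀ z ∈ s, z ≠ r → ∃ w ∈ s, G.Adj z w ∧ f w + 1 = f z)
    (hD : ∀ z ∈ s, f z ≤ D)
    (hr : ∀ z ∈ s, f z = D → z ≠ r)
    (heven : ∀ z ∈ s, f z = D → Even #{y ∈ s | G.Adj z y})
    (hindep : ∀ z ∈ s, ∀ y ∈ s, f z = D → f y = D → ¬G.Adj z y)
    {x u : V} (hfx : f x = D) (hfu : f u + 1 = D) : G.ConnectedOn (s \ {x, u}) := by
  have htop (z : V) (hz : z ∈ s) (hfz : f z = D) :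
      ∃ w ∈ s, G.Adj z w ∧ w ≠ u ∧ f w < D := by
    obtain ⟨w, hw, hzw, -⟩ := hpred z hz (hr z hz hfz)
    have hdeg : 1 < #{y ∈ s | G.Adj z y} := by
      have hpos : 0 < #{y ∈ s | G.Adj z y} := card_pos.2 ⟨w, mem_filter.2 ⟨hw, hzw⟩⟩
      obtain ⟨k, hk⟩ := heven z hz hfz
      omega
    obtain ⟨y, hy, hyu⟩ := exists_mem_ne hdeg u
    rw [mem_filter] at hy
    exact ⟨y, hy.1, hy.2, hyu, (hD y hy.1).lt_of_ne fun hfy => hindep z hz y hy.1 hfz hfy hy.2⟩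
  refine G.connectedOn_of_forall_exists_adj_lt r f fun z hz hzr => ?_
  simp only [mem_sdiff, mem_insert, mem_singleton, not_or] at hz
  obtain ⟨w, hw, hadj, hwu, hfwD, hfwz⟩ :
      ∃ w ∈ s, G.Adj z w ∧ w ≠ u ∧ f w < D ∧ f w < f z := by
    rcases (hD z hz.1).eq_or_lt with h | h
    · obtain ⟨w, hw, hadj, hwu, hfw⟩ := htop z hz.1 h
      exact ⟨w, hw, hadj, hwu, hfw, by omega⟩
    · obtain ⟨w, hw, hadj, hfw⟩ := hpred z hz.1 hzr
      exact ⟨w, hw, hadj, fun hwu => by subst hwu; omega, by omega, by omega⟩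
  refine ⟨w, ?_, hadj, hfwz⟩
  simp only [mem_sdiff, mem_insert, mem_singleton, not_or]
  exact ⟨hw, fun hwx => by subst hwx; omega, hwu⟩

end Levels

lemma ConnectedOn.exists_odd_or_adj {s : Finset V} (hs : G.ConnectedOn s) (h : 1 < #s) :
    (∃ x ∈ s, Odd #{y ∈ s | G.Adj x y} ∧ G.ConnectedOn (s.erase x)) ∨
    (∃ x ∈ s, ∃ u ∈ s, G.Adj x u ∧ G.ConnectedOn ((s.erase x).erase u)) := by
  obtain ⟨r, hr⟩ := card_pos.1 (by omega : 0 < #s)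
  set f := fun z => (G.restrict s).dist z r
  have hpred : ∀ z ∈ s, z ≠ r → ∃ w ∈ s, G.Adj z w ∧ f w + 1 = f z :=
    fun z hz hzr => hs.exists_adj_dist_add_one hz hr hzr
  have hfr : f r = 0 := dist_self
  set D := s.sup f
  have hD : ∀ z ∈ s, f z ≤ D := fun z hz => le_sup hz
  have hrD : ∀ z ∈ s, f z = D → z ≠ r := by
    obtain ⟨z, hz, hzr⟩ := exists_mem_ne h r
    obtain ⟨w, -, -, hfw⟩ := hpred z hz hzr
    rintro y - hy rfl
    have := hD z hz
    omega
  have herase (a b : V) : s \ {a, b} = (s.erase a).erase b := by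
    rw [sdiff_insert, sdiff_singleton_eq_erase, erase_right_comm]
  by_cases hodd : ∃ x ∈ s, f x = D ∧ Odd #{y ∈ s | G.Adj x y}
  · obtain ⟨x, hx, hfx, hodd⟩ := hodd
    refine .inl ⟨x, hx, hodd, ?_⟩
    rw [← sdiff_singleton_eq_erase]
    exact connectedOn_sdiff_of_forall_eq_max hpred hD (by simpa using hfx)
  by_cases hadj : ∃ x ∈ s, ∃ y ∈ s, f x = D ∧ f y = D ∧ G.Adj x y
  · obtain ⟨x, hx, y, hy, hfx, hfy, hxy⟩ := hadj
    refine .inr ⟨x, hx, y, hy, hxy,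
      herase x y ▸ connectedOn_sdiff_of_forall_eq_max hpred hD ?_⟩
    simp [hfx, hfy]
  push Not at hodd hadj
  simp only [Nat.not_odd_iff_even] at hodd
  obtain ⟨x, hx, hfx⟩ := exists_mem_eq_sup s ⟨r, hr⟩ f
  obtain ⟨u, hu, hxu, hfu⟩ := hpred x hx (hrD x hx hfx.symm)
  exact .inr ⟨x, hx, u, hu, hxu, herase x u ▸ connectedOn_sdiff_pair_of_forall_eq_max hpred hD
    hrD hodd hadj hfx.symm (hfu.trans hfx.symm)⟩

lemma exists_card_add_card_le_two_mul (A B : Finset V) (c : V → Bool) :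
    ∃ σ : Bool, #A + #B ≤ 2 * (#{y ∈ A | σ ≠ c y} + #{y ∈ B | (!σ) ≠ c y}) := by
  have split (S : Finset V) (b : Bool) :
      #{y ∈ S | b ≠ c y} + #{y ∈ S | (!b) ≠ c y} = #S := by
    rw [← S.card_filter_add_card_filter_not (b ≠ c ·)]
    congr 2
    exact filter_congr fun y _ => by cases b <;> cases c y <;> decide
  have hA := split A true
  have hB := split B false
  simp only [Bool.not_true, Bool.not_false] at hA hB
  by_cases h : #{y ∈ A | true ≠ c y} + #{y ∈ B | false ≠ c y}
      ≤ #{y ∈ A | false ≠ c y} + #{y ∈ B | true ≠ c y}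
  · exact ⟨false, by simp only [Bool.not_false]; omega⟩
  · exact ⟨true, by simp only [Bool.not_true]; omega⟩

variable [Fintype V] (G)

@[simp]
lemma restrict_univ : G.restrict univ = G := by
  ext; simp

@[simp]
lemma edgeFinset_restrict_univ : (G.restrict univ).edgeFinset = G.edgeFinset := by
  ext; simp

lemma edgeFinset_cutGraph {α : Type*} [DecidableEq α] (c : V → α) :
    (G.cutGraph c).edgeFinset =
      G.edgeFinset.filter fun e => ∀ u v, e = s(u, v) → c u ≠ c v := by
  ext e
  induction e using Sym2.ind with
  | _ a b =>
    simp only [mem_edgeFinset, mem_edgeSet, cutGraph_adj, mem_filter, Sym2.eq_iff]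
    constructor
    · rintro ⟨hab, hc⟩
      refine ⟨hab, fun u v huv => ?_⟩
      rcases huv with ⟨rfl, rfl⟩ | ⟨rfl, rfl⟩
      exacts [hc, hc.symm]
    · rintro ⟨hab, hc⟩
      exact ⟨hab, hc a b (Or.inl ⟨rfl, rfl⟩)⟩

lemma card_edgeFinset_restrict_insert {t : Finset V} {x : V} (hx : x ∉ t) :
    #(G.restrict (insert x t)).edgeFinset =
      #(G.restrict t).edgeFinset + #{y ∈ t | G.Adj x y} := by
  set K := G.restrict (insert x t)
  have hdel : K.deleteIncidenceSet x = G.restrict t := by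
    ext u v
    simp only [deleteIncidenceSet_adj, restrict_adj, K, mem_insert]
    constructor
    · rintro ⟨⟨hadj, hu | hu, hv | hv⟩, hux, hvx⟩ <;> simp_all
    · rintro ⟨hadj, hu, hv⟩
      exact ⟨⟨hadj, Or.inr hu, Or.inr hv⟩, fun h => hx (h ▸ hu), fun h => hx (h ▸ hv)⟩
  have hdeg : K.degree x = #{y ∈ t | G.Adj x y} := by
    rw [← card_neighborFinset_eq_degree]
    congr 1
    ext y
    simp only [mem_neighborFinset, restrict_adj, K, mem_insert, mem_filter, true_or, true_and]
    constructor
    · rintro ⟨hadj, rfl | hy⟩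
      exacts [absurd hadj (G.irrefl), ⟨hy, hadj⟩]
    · rintro ⟨hy, hadj⟩
      exact ⟨hadj, Or.inr hy⟩
  have hcard : #(G.restrict t).edgeFinset = #K.edgeFinset - K.degree x := by
    convert K.card_edgeFinset_deleteIncidenceSet x using 3
    exact hdel.symm
  have hle := K.degree_le_card_edgeFinset x
  omega

def EdwardsBound (s : Finset V) (c : V → Bool) : Prop :=
  2 * #(G.restrict s).edgeFinset + #s ≤ 4 * #((G.cutGraph c).restrict s).edgeFinset + 1

variable {G}

lemma Connected.connectedOn_univ (hG : G.Connected) : G.ConnectedOn univ := by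
  intro a _ b _
  rw [restrict_univ]
  exact hG a b

lemma EdwardsBound.insert_of_odd {t : Finset V} {x : V} (hx : x ∉ t) {c : V → Bool}
    (hc : G.EdwardsBound t c) (hodd : Odd #{y ∈ insert x t | G.Adj x y}) :
    ∃ c' : V → Bool, G.EdwardsBound (insert x t) c' := by
  rw [filter_insert, if_neg (G.irrefl)] at hodd
  obtain ⟨σ, hσ⟩ := exists_card_add_card_le_two_mul {y ∈ t | G.Adj x y} ∅ c
  have hagree : ∀ y ∈ t, Function.update c x σ y = c y :=
    fun y hy => Function.update_of_ne (ne_of_mem_of_not_mem hy hx) _ _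
  refine ⟨Function.update c x σ, ?_⟩
  unfold EdwardsBound at hc ⊢
  rw [card_edgeFinset_restrict_insert _ hx, card_edgeFinset_restrict_insert _ hx,
    restrict_cutGraph_congr _ hagree, filter_cutGraph_adj _ _ hagree, Function.update_self,
    card_insert_of_notMem hx]
  rw [card_empty, filter_empty, card_empty] at hσ
  obtain ⟨k, hk⟩ := hodd
  omega

lemma EdwardsBound.insert_insert_of_adj {t : Finset V} {x u : V} (hx : x ∉ insert u t)
    (hu : u ∉ t) (hxu : G.Adj x u) {c : V → Bool} (hc : G.EdwardsBound t c) :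
    ∃ c' : V → Bool, G.EdwardsBound (insert x (insert u t)) c' := by
  obtain ⟨σ, hσ⟩ :=
    exists_card_add_card_le_two_mul {y ∈ t | G.Adj x y} {y ∈ t | G.Adj u y} c
  set c' := Function.update (Function.update c u (!σ)) x σ
  have hc'x : c' x = σ := Function.update_self ..
  have hc'u : c' u = !σ := by simp [c', Function.update_of_ne hxu.ne.symm]
  have hagree : ∀ y ∈ t, c' y = c y := fun y hy => by
    have hyx : y ≠ x := ne_of_mem_of_not_mem hy fun h => hx (mem_insert_of_mem h)
    simp only [c', Function.update_of_ne hyx, Function.update_of_ne (ne_of_mem_of_not_mem hy hu)]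
  have hcut : (G.cutGraph c').Adj x u := ⟨hxu, by simp [hc'x, hc'u]⟩
  refine ⟨c', ?_⟩
  unfold EdwardsBound at hc ⊢
  rw [card_edgeFinset_restrict_insert _ hx, card_edgeFinset_restrict_insert _ hu,
    card_edgeFinset_restrict_insert _ hx, card_edgeFinset_restrict_insert _ hu,
    filter_insert, if_pos hxu, filter_insert, if_pos hcut,
    card_insert_of_notMem (fun h => hu (mem_filter.1 h).1),
    card_insert_of_notMem (fun h => hu (mem_filter.1 h).1),
    restrict_cutGraph_congr _ hagree, filter_cutGraph_adj _ x hagree,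
    filter_cutGraph_adj _ u hagree, hc'x, hc'u, card_insert_of_notMem hx,
    card_insert_of_notMem hu]
  omega

theorem ConnectedOn.exists_edwardsBound {s : Finset V} (hs : G.ConnectedOn s) :
    ∃ c : V → Bool, G.EdwardsBound s c := by
  induction s using Finset.strongInduction with
  | H s ih =>
  rcases le_or_gt #s 1 with hs1 | hs1
  · have hempty : (G.restrict s).edgeFinset = ∅ := by
      rw [edgeFinset_eq_empty]
      ext u v
      simp only [restrict_adj, bot_adj, iff_false]
      rintro ⟨hadj, hu, hv⟩
      exact hadj.ne (card_le_one.1 hs1 u hu v hv)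
    refine ⟨fun _ => true, ?_⟩
    simp only [EdwardsBound, hempty, card_empty]
    omega
  rcases hs.exists_odd_or_adj hs1 with ⟨x, hx, hodd, hconn⟩ | ⟨x, hx, u, hu, hxu, hconn⟩
  · obtain ⟨c, hc⟩ := ih _ (erase_ssubset hx) hconn
    rw [← insert_erase hx] at hodd ⊢
    exact hc.insert_of_odd (notMem_erase x s) hodd
  · have hu' : u ∈ s.erase x := mem_erase.2 ⟨hxu.ne', hu⟩
    obtain ⟨c, hc⟩ := ih _ ((erase_ssubset hu').trans (erase_ssubset hx)) hconn
    rw [← insert_erase hx, ← insert_erase hu']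
    exact hc.insert_insert_of_adj (by rw [insert_erase hu']; exact notMem_erase x s)
      (notMem_erase u _) hxu

end SimpleGraph

open SimpleGraph in
/-- Edwards–Erdős bound: every connected graph with `n` vertices and `m` edges has a
2-coloring with at least `m/2 + (n-1)/4` properly colored edges. -/
theorem stmt12 {V : Type*} [Fintype V] (G : SimpleGraph V) (hG : G.Connected) :
    ∃ c : V → ℤ, (∀ v, c v = 1 ∨ c v = -1) ∧
      (G.edgeFinset.card : ℝ) / 2 + ((Fintype.card V : ℝ) - 1) / 4
        ≤ ((G.edgeFinset.filter fun e => ∀ u v : V, e = s(u, v) → c u ≠ c v).card : ℝ) := by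
  obtain ⟨c, hc⟩ := hG.connectedOn_univ.exists_edwardsBound
  set sign : Bool → ℤ := fun b => if b then 1 else -1
  have hsign : Function.Injective sign := by decide
  refine ⟨sign ∘ c, fun v => by cases c v <;> simp [sign], ?_⟩
  rw [← edgeFinset_cutGraph, cutGraph_comp _ hsign]
  simp only [EdwardsBound, edgeFinset_restrict_univ, card_univ] at hc
  have hc' : (2 * #G.edgeFinset + Fintype.card V : ℝ) ≤ 4 * #(G.cutGraph c).edgeFinset + 1 := by
    exact_mod_cast hc
  linarith
end

section
/- Let G = (V,E) be a connected graph with n vertices and m edges in which each edge e is labeled s_e ∈ {=, ≠}. Then there exists a 2-coloring c : V → {-1,1} such that the number of satisfied edges is at least m/2 + (n-1)/4, where an edge uv labeled = is satisfied if c(u) = c(v) and an edge labeled ≠ is satisfied if c(u) ≠ c(v). -/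
/-!
Encode a colouring as `c : V → ℤ` with values `±1` and the labels by the signed adjacency
`A x y = ±1` on edges (`+1` for `=`). Then `∑ x y, A x y * c x * c y = 4 * #satisfied - 2 * m`,
so it suffices to find, for every vertex set `s` inducing a connected subgraph, a colouring with
`∑ x ∈ s, ∑ y ∈ s, A x y * c x * c y ≥ #s - 1`. This goes by induction on `s`: a connected `s`
with at least two vertices has a vertex `w` of odd degree, or an edge `uv`, whose deletion leaves
`s` connected. Colouring `w` by the majority of its odd number of edges gains at least `2`; so
does colouring `u, v` to satisfy `uv` and flipping the colouring of the rest so that at least half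
of the edges leaving `{u, v}` are satisfied.

Such a vertex or edge exists: let `u` be a vertex farthest from a base point `b`, so `s - u` is
connected. If `u` has even degree, let `v` be a neighbour of `u` farthest from `b` in `s - u`. If
`s - u - v` is disconnected, the part cut off from `b` has no neighbour of `u`, so it hangs on `v`
alone; recursing into it with base point `v` yields a vertex or an edge that also works for `s`.
-/

open scoped Classical
open Finset

theorem Sym2.forall_mk_eq_imp_iff {α : Type*} {r : α → α → Prop} (hr : ∀ u v, r u v → r v u)
    {x y : α} : (∀ u v, s(x, y) = s(u, v) → r u v) ↔ r x y := by
  refine ⟨fun h => h x y rfl, fun h u v huv => ?_⟩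
  rcases Sym2.eq_iff.1 huv with ⟨rfl, rfl⟩ | ⟨rfl, rfl⟩
  exacts [h, hr _ _ h]

theorem Int.exists_sign_mul_eq_abs (a : ℤ) : ∃ ε : ℤ, (ε = 1 ∨ ε = -1) ∧ ε * a = |a| := by
  rcases abs_choice a with h | h
  · exact ⟨1, .inl rfl, by rw [h, one_mul]⟩
  · exact ⟨-1, .inr rfl, by rw [h, neg_one_mul]⟩

namespace SimpleGraph

variable {V : Type*} {G : SimpleGraph V}

theorem Walk.exists_support_eq_map_val {t : Set V} {x y : t} (p : (G.induce t).Walk x y) :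
    ∃ q : G.Walk x y, q.support = p.support.map Subtype.val :=
  ⟨p.map (Embedding.induce t).toHom, p.support_map _⟩

theorem induce_reachable_iff {t : Set V} {x y : t} :
    (G.induce t).Reachable x y ↔ ∃ p : G.Walk x y, ∀ z ∈ p.support, z ∈ t := by
  constructor
  · rintro ⟨p⟩
    obtain ⟨q, hq⟩ := p.exists_support_eq_map_val
    refine ⟨q, fun z hz => ?_⟩
    rw [hq] at hz
    obtain ⟨z', -, rfl⟩ := List.mem_map.1 hz
    exact z'.2
  · rintro ⟨p, hp⟩
    exact ⟨p.induce t hp⟩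

theorem induce_connected_iff {t : Set V} :
    (G.induce t).Connected ↔ ∃ b ∈ t, ∀ y ∈ t, ∃ p : G.Walk b y, ∀ z ∈ p.support, z ∈ t := by
  simp only [connected_iff_exists_forall_reachable, induce_reachable_iff, Subtype.forall,
    Subtype.exists, exists_prop]

theorem Walk.forall_mem_support_concat {t : Set V} {x y z : V} {p : G.Walk x y}
    (hp : ∀ w ∈ p.support, w ∈ t) (h : G.Adj y z) (hz : z ∈ t) :
    ∀ w ∈ (p.concat h).support, w ∈ t := by
  simpa [Walk.support_concat, or_imp, forall_and] using ⟨hp, hz⟩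

theorem Walk.mem_of_forall_adj_mem {t P : Set V} (hP : ∀ x ∈ P, ∀ z ∈ t, G.Adj x z → z ∈ P)
    {x y : V} (p : G.Walk x y) (hp : ∀ z ∈ p.support, z ∈ t) (hx : x ∈ P) : y ∈ P := by
  induction p with
  | nil => exact hx
  | cons h p ih =>
    simp only [Walk.support_cons, List.mem_cons, forall_eq_or_imp] at hp
    exact ih hp.2 (hP _ hx _ (hp.2 _ p.start_mem_support) h)

theorem subset_of_forall_adj_mem {t P : Set V} (ht : (G.induce t).Connected)
    (hP : ∀ x ∈ P, ∀ z ∈ t, G.Adj x z → z ∈ P) {x : V} (hxt : x ∈ t) (hxP : x ∈ P) :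
    t ⊆ P := fun y hyt => by
  obtain ⟨p, hp⟩ := induce_reachable_iff.1 (ht.preconnected ⟨x, hxt⟩ ⟨y, hyt⟩)
  exact p.mem_of_forall_adj_mem hP hp hxP

theorem induce_connected_sdiff {s D : Set V} {v : V} (hs : (G.induce s).Connected)
    (hv : v ∈ s) (hvD : v ∉ D) (hD : ∀ x ∈ D, ∀ z ∈ s, G.Adj x z → z ∈ D ∨ z = v) :
    (G.induce (s \ D)).Connected := by
  set R : Set V := {y | ∃ p : G.Walk v y, ∀ z ∈ p.support, z ∈ s \ D}
  have hclosed : ∀ x ∈ D ∪ R, ∀ z ∈ s, G.Adj x z → z ∈ D ∪ R := by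
    rintro x (hx | ⟨p, hp⟩) z hz hxz
    · rcases hD x hx z hz hxz with h | rfl
      · exact .inl h
      · exact .inr ⟨.nil, by simpa using ⟨hv, hvD⟩⟩
    · by_cases hzD : z ∈ D
      · exact .inl hzD
      · exact .inr ⟨p.concat hxz, Walk.forall_mem_support_concat hp hxz ⟨hz, hzD⟩⟩
  have hsub := subset_of_forall_adj_mem hs hclosed hv (.inr ⟨.nil, by simpa using ⟨hv, hvD⟩⟩)
  refine induce_connected_iff.2 ⟨v, ⟨hv, hvD⟩, fun y hy => ?_⟩
  exact (hsub hy.1).resolve_left hy.2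

theorem induce_connected_insert_of_pendant {s C : Finset V} {v : V}
    (hs : (G.induce ↑s).Connected) (hv : v ∈ s) (hCs : C ⊆ s)
    (hC : ∀ x ∈ C, ∀ z ∈ s, G.Adj x z → z ∈ C ∨ z = v) :
    (G.induce ↑(insert v C)).Connected := by
  have hD : ∀ x ∈ (↑(s \ insert v C) : Set V), ∀ z ∈ (↑s : Set V), G.Adj x z →
      z ∈ (↑(s \ insert v C) : Set V) ∨ z = v := by
    intro x hx z hz hxz
    simp only [coe_sdiff, coe_insert, Set.mem_sdiff, Set.mem_insert_iff, mem_coe] at hx ⊢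
    by_cases hzC : z ∈ C
    · have := hC z hzC x hx.1 hxz.symm
      tauto
    · tauto
  have := induce_connected_sdiff hs hv (by simp) hD
  rwa [coe_sdiff, Set.sdiff_sdiff_cancel_left (coe_subset.2 (insert_subset hv hCs))] at this

theorem filter_adj_nonempty {s : Finset V} {u b : V} (hs : (G.induce ↑s).Connected) (hu : u ∈ s)
    (hb : b ∈ s) (hub : u ≠ b) : {x ∈ s | G.Adj u x}.Nonempty := by
  by_contra hN
  rw [not_nonempty_iff_eq_empty, filter_eq_empty_iff] at hN
  refine hub (subset_of_forall_adj_mem hs (P := {u}) ?_ hu rfl hb).symm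
  rintro x rfl z hz hxz
  exact absurd hxz (hN hz)

theorem induce_connected_erase {s : Finset V} {b u : V} (hb : b ∈ s.erase u)
    (h : ∀ y ∈ s, y ≠ u → ∃ p : G.Walk b y, ∀ z ∈ p.support, z ∈ (↑s : Set V) ∧ z ≠ u) :
    (G.induce ↑(s.erase u)).Connected := by
  refine induce_connected_iff.2 ⟨b, hb, fun y hy => ?_⟩
  obtain ⟨hyu, hys⟩ := mem_erase.1 hy
  obtain ⟨p, hp⟩ := h y hys hyu
  exact ⟨p, fun z hz => mem_erase.2 ⟨(hp z hz).2, (hp z hz).1⟩⟩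

theorem Reachable.exists_walk_notMem_support {W : Type*} {H : SimpleGraph W} {b x y : W}
    (hr : H.Reachable b y) (hxy : x ≠ y) (h : H.dist b y ≤ H.dist b x) :
    ∃ p : H.Walk b y, x ∉ p.support := by
  obtain ⟨p, hp⟩ := hr.exists_walk_length_eq_dist
  refine ⟨p, fun hx => ?_⟩
  have := p.length_takeUntil_lt_length hx hxy
  have := H.dist_le (p.takeUntil x hx)
  omega

theorem exists_mem_forall_exists_walk_avoiding {T : Set V} {K : Finset V} {b : V}
    (hT : (G.induce T).Connected) (hb : b ∈ T) (hKT : ↑K ⊆ T) (hK : ∃ x ∈ K, x ≠ b) :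
    ∃ v ∈ K, v ≠ b ∧ ∀ x ∈ K, x ≠ v → ∃ p : G.Walk b x, ∀ z ∈ p.support, z ∈ T ∧ z ≠ v := by
  -- `v` is a vertex of `K` farthest from `b`: a shortest walk to another vertex of `K` avoids it.
  let d : V → ℕ := fun x => if h : x ∈ T then (G.induce T).dist ⟨b, hb⟩ ⟨x, h⟩ else 0
  have hd : ∀ x (h : x ∈ T), d x = (G.induce T).dist ⟨b, hb⟩ ⟨x, h⟩ := fun x h => dif_pos h
  obtain ⟨x₀, hx₀K, hx₀b⟩ := hK
  obtain ⟨v, hvK, hvmax⟩ := K.exists_max_image d ⟨x₀, hx₀K⟩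
  have hvb : v ≠ b := by
    rintro rfl
    have h0 := hvmax x₀ hx₀K
    rw [hd _ (hKT hx₀K), hd _ hb, dist_self, Nat.le_zero,
      dist_eq_zero_iff_eq_or_not_reachable] at h0
    exact h0.elim (fun h => hx₀b (congrArg Subtype.val h).symm) (· (hT.preconnected _ _))
  refine ⟨v, hvK, hvb, fun x hxK hxv => ?_⟩
  have hle := hvmax x hxK
  rw [hd _ (hKT hxK), hd _ (hKT hvK)] at hle
  obtain ⟨p, hp⟩ := (hT.preconnected ⟨b, hb⟩ ⟨x, hKT hxK⟩).exists_walk_notMem_support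
    (fun h => hxv (congrArg Subtype.val h).symm) hle
  obtain ⟨q, hq⟩ := p.exists_support_eq_map_val
  refine ⟨q, fun z hz => ?_⟩
  rw [hq] at hz
  obtain ⟨z', hz', rfl⟩ := List.mem_map.1 hz
  exact ⟨z'.2, fun h => hp (by rwa [show z' = ⟨v, hKT hvK⟩ from Subtype.ext h] at hz')⟩

theorem exists_pendant_of_not_connected {s : Finset V} {u v b : V}
    (hb : b ∈ (s.erase u).erase v)
    (hv : ∀ x ∈ {x ∈ s | G.Adj u x}, x ≠ v →
      ∃ p : G.Walk b x, ∀ z ∈ p.support, z ∈ (↑(s.erase u) : Set V) ∧ z ≠ v)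
    (hconn : ¬ (G.induce ↑((s.erase u).erase v)).Connected) :
    ∃ C : Finset V, C.Nonempty ∧ C ⊆ (s.erase u).erase v ∧ b ∉ C ∧
      ∀ x ∈ C, ∀ z ∈ s, G.Adj x z → z ∈ C ∨ z = v := by
  set T := (s.erase u).erase v
  set C : Finset V := {x ∈ T | ¬ ∃ p : G.Walk b x, ∀ z ∈ p.support, z ∈ T}
  refine ⟨C, ?_, filter_subset _ _, fun h => (mem_filter.1 h).2 ⟨.nil, by simpa using hb⟩, ?_⟩
  · by_contra hC
    refine hconn (induce_connected_iff.2 ⟨b, hb, fun y hy => ?_⟩)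
    by_contra hy'
    exact hC ⟨y, mem_filter.2 ⟨hy, hy'⟩⟩
  intro x hx z hz hxz
  obtain ⟨hxT, hxb⟩ := mem_filter.1 hx
  by_cases hzv : z = v
  · exact .inr hzv
  by_cases hzu : z = u
  · subst hzu
    obtain ⟨p, hp⟩ := hv x (mem_filter.2 ⟨mem_of_mem_erase (mem_of_mem_erase hxT), hxz.symm⟩)
      (ne_of_mem_erase hxT)
    exact absurd ⟨p, fun y hy => mem_erase.2 ⟨(hp y hy).2, (hp y hy).1⟩⟩ hxb
  · refine .inl (mem_filter.2 ⟨mem_erase.2 ⟨hzv, mem_erase.2 ⟨hzu, hz⟩⟩, fun ⟨p, hp⟩ => hxb ?_⟩)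
    exact ⟨p.concat hxz.symm, Walk.forall_mem_support_concat hp hxz.symm hxT⟩

/-- The base point `b` is never deleted; this is what lets a reduction found inside a piece of `s`
hanging on the single vertex `v` (with base point `v`) serve for `s` itself. -/
def ExistsReduction (G : SimpleGraph V) (s : Finset V) (b : V) : Prop :=
  (∃ w ∈ s, w ≠ b ∧ (G.induce ↑(s.erase w)).Connected ∧ Odd #{x ∈ s | G.Adj w x}) ∨
    ∃ u ∈ s, ∃ v ∈ s, u ≠ b ∧ v ≠ b ∧ G.Adj u v ∧ (G.induce ↑((s.erase u).erase v)).Connected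

theorem ExistsReduction.of_pendant {s C : Finset V} {b v : V} (hs : (G.induce ↑s).Connected)
    (hv : v ∈ s) (hvC : v ∉ C) (hCs : C ⊆ s) (hbC : b ∉ C)
    (hC : ∀ x ∈ C, ∀ z ∈ s, G.Adj x z → z ∈ C ∨ z = v) (h : G.ExistsReduction (insert v C) v) :
    G.ExistsReduction s b := by
  have hsC : (G.induce ↑(s \ C)).Connected := by
    rw [coe_sdiff]
    exact induce_connected_sdiff hs hv hvC hC
  have glue : ∀ R ⊆ C, (G.induce ↑(insert v C \ R)).Connected → (G.induce ↑(s \ R)).Connected := by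
    intro R hR hconn
    have hvR : v ∉ R := fun h => hvC (hR h)
    have hunion := induce_union_connected hconn.preconnected hsC.preconnected
      ⟨v, by simp [hv, hvC, hvR]⟩
    rwa [← coe_union, show insert v C \ R ∪ (s \ C) = s \ R by
      ext x; simp only [mem_union, mem_sdiff, mem_insert]
      have := @hCs x; have := @hR x; grind] at hunion
  rcases h with ⟨w, hwH, hwv, hconn, hodd⟩ | ⟨u, huH, u', hu'H, huv, hu'v, hadj, hconn⟩
  · have hwC : w ∈ C := (mem_insert.1 hwH).resolve_left hwv
    refine .inl ⟨w, hCs hwC, fun h => hbC (h ▸ hwC), ?_, ?_⟩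
    · rw [erase_eq] at hconn ⊢
      exact glue {w} (singleton_subset_iff.2 hwC) hconn
    · convert hodd using 2
      ext x
      simp only [mem_filter, mem_insert]
      have := hC w hwC x
      have := @hCs x
      grind
  · have huC : u ∈ C := (mem_insert.1 huH).resolve_left huv
    have hu'C : u' ∈ C := (mem_insert.1 hu'H).resolve_left hu'v
    refine .inr ⟨u, hCs huC, u', hCs hu'C, fun h => hbC (h ▸ huC), fun h => hbC (h ▸ hu'C), hadj,
      ?_⟩
    have herase : ∀ t : Finset V, (t.erase u).erase u' = t \ {u, u'} := fun t => by
      ext x; simp only [mem_erase, mem_sdiff, mem_insert, mem_singleton]; tauto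
    rw [herase] at hconn ⊢
    exact glue {u, u'} (by simp [insert_subset_iff, huC, hu'C]) hconn

theorem ExistsReduction.of_induce_connected (s : Finset V) (hs : (G.induce ↑s).Connected)
    (h2 : 2 ≤ #s) (b : V) (hb : b ∈ s) : G.ExistsReduction s b := by
  induction s using Finset.strongInduction generalizing b with
  | H s ih =>
  obtain ⟨u, hus, hub, hu⟩ :=
    exists_mem_forall_exists_walk_avoiding hs hb subset_rfl (exists_mem_ne h2 b)
  set T := s.erase u
  have hbT : b ∈ T := mem_erase.2 ⟨hub.symm, hb⟩
  have hT : (G.induce ↑T).Connected := induce_connected_erase hbT hu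
  rcases Nat.even_or_odd #{x ∈ s | G.Adj u x} with heven | hodd
  swap
  · exact .inl ⟨u, hus, hub, hT, hodd⟩
  have hN2 : 1 < #{x ∈ s | G.Adj u x} := by
    obtain ⟨k, hk⟩ := heven
    have := (filter_adj_nonempty hs hus hb hub).card_pos
    omega
  obtain ⟨v, hvN, hvb, hv⟩ := exists_mem_forall_exists_walk_avoiding hT hbT
    (fun x hx => by rw [mem_coe, mem_filter] at hx; exact mem_erase.2 ⟨hx.2.ne', hx.1⟩)
    (exists_mem_ne hN2 b)
  obtain ⟨hvs, huv⟩ := mem_filter.1 hvN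
  by_cases hconn : (G.induce ↑(T.erase v)).Connected
  · exact .inr ⟨u, hus, v, hvs, hub, hvb, huv, hconn⟩
  obtain ⟨C, ⟨w₀, hw₀⟩, hCT, hbC, hC⟩ :=
    exists_pendant_of_not_connected (mem_erase.2 ⟨hvb.symm, hbT⟩) hv hconn
  have hCs : C ⊆ s := hCT.trans ((erase_subset _ _).trans (erase_subset _ _))
  have hvC : v ∉ C := fun h => ne_of_mem_erase (hCT h) rfl
  have huC : u ∉ C := fun h => ne_of_mem_erase (mem_of_mem_erase (hCT h)) rfl
  refine .of_pendant hs hvs hvC hCs hbC hC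
    (ih _ ?_ (induce_connected_insert_of_pendant hs hvs hCs hC) ?_ v (mem_insert_self v C))
  · exact (ssubset_iff_of_subset (insert_subset hvs hCs)).2 ⟨u, hus, by simp [huC, huv.ne]⟩
  · rw [card_insert_of_notMem hvC]
    have := card_pos.2 ⟨w₀, hw₀⟩
    omega

/-- `σ e = true` encodes the label `=`, so for a `±1` colouring `c`,
`signedAdj G σ x y * c x * c y` is `1` on a satisfied edge and `-1` on a violated one. -/
noncomputable def signedAdj (G : SimpleGraph V) (σ : Sym2 V → Bool) (x y : V) : ℤ :=
  if G.Adj x y then (if σ s(x, y) then 1 else -1) else 0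

noncomputable def signedForm (G : SimpleGraph V) (σ : Sym2 V → Bool) (s : Finset V) (c : V → ℤ) :
    ℤ :=
  ∑ x ∈ s, ∑ y ∈ s, signedAdj G σ x y * c x * c y

variable {σ : Sym2 V → Bool}

theorem signedAdj_comm (x y : V) : signedAdj G σ x y = signedAdj G σ y x := by
  simp only [signedAdj, G.adj_comm, Sym2.eq_swap]

@[simp]
theorem signedAdj_self (x : V) : signedAdj G σ x x = 0 := by
  simp [signedAdj]

theorem signedAdj_mul_self {x y : V} (h : G.Adj x y) :
    signedAdj G σ x y * signedAdj G σ x y = 1 := by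
  simp only [signedAdj, if_pos h]
  split_ifs <;> norm_num

theorem signedForm_insert {s : Finset V} {w : V} (hw : w ∉ s) (c : V → ℤ) :
    signedForm G σ (insert w s) c =
      signedForm G σ s c + 2 * c w * ∑ y ∈ s, signedAdj G σ w y * c y := by
  have hcol : ∑ x ∈ s, signedAdj G σ x w * c x * c w = ∑ y ∈ s, signedAdj G σ w y * c w * c y :=
    sum_congr rfl fun x _ => by rw [signedAdj_comm]; ring
  simp only [signedForm, sum_insert hw, signedAdj_self, zero_mul, zero_add, sum_add_distrib, hcol,
    mul_sum]
  rw [← sum_add_distrib, ← sum_add_distrib, ← sum_add_distrib]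
  exact sum_congr rfl fun y _ => by ring

theorem signedForm_congr {s : Finset V} {c c' : V → ℤ} {ε : ℤ} (hε : ε * ε = 1)
    (h : ∀ x ∈ s, c' x = ε * c x) : signedForm G σ s c' = signedForm G σ s c := by
  refine sum_congr rfl fun x hx => sum_congr rfl fun y hy => ?_
  rw [h x hx, h y hy]
  linear_combination signedAdj G σ x y * c x * c y * hε

theorem odd_sum_signedAdj_mul {s : Finset V} {w : V} {c : V → ℤ}
    (hc : ∀ v, c v = 1 ∨ c v = -1) (h : Odd #{y ∈ s | G.Adj w y}) :
    Odd (∑ y ∈ s, signedAdj G σ w y * c y) := by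
  have hsplit : ∑ y ∈ s, signedAdj G σ w y * c y = (#{y ∈ s | G.Adj w y} : ℤ) +
      ∑ y ∈ s, (signedAdj G σ w y * c y - if G.Adj w y then 1 else 0) := by
    rw [sum_sub_distrib, sum_boole]
    ring
  rw [hsplit]
  refine (h.natCast (R := ℤ)).add_even (even_sum _ fun y _ => ?_)
  unfold signedAdj
  split_ifs <;> rcases hc y with h | h <;> simp [h]

theorem exists_signedForm_insert_ge_of_odd {s : Finset V} {w : V} {c : V → ℤ} (hw : w ∉ s)
    (hc : ∀ v, c v = 1 ∨ c v = -1) (hodd : Odd #{y ∈ s | G.Adj w y}) :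
    ∃ c' : V → ℤ, (∀ v, c' v = 1 ∨ c' v = -1) ∧
      signedForm G σ s c + 2 ≤ signedForm G σ (insert w s) c' := by
  have hT := odd_sum_signedAdj_mul (σ := σ) hc hodd
  obtain ⟨ε, hε, hεT⟩ := Int.exists_sign_mul_eq_abs (∑ y ∈ s, signedAdj G σ w y * c y)
  have hT1 : 1 ≤ |∑ y ∈ s, signedAdj G σ w y * c y| :=
    Int.one_le_abs fun h0 => by simp [h0] at hT
  have hoff : ∀ y ∈ s, Function.update c w ε y = c y := fun y hy =>
    Function.update_of_ne (ne_of_mem_of_not_mem hy hw) _ _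
  refine ⟨Function.update c w ε, fun v => ?_, ?_⟩
  · rcases eq_or_ne v w with rfl | hv
    · simpa using hε
    · simpa [hv] using hc v
  rw [signedForm_insert hw,
    signedForm_congr (c' := Function.update c w ε) (c := c) (ε := 1) (by norm_num)
      fun y hy => by rw [hoff y hy, one_mul],
    sum_congr rfl fun y hy => by rw [hoff y hy], Function.update_self]
  linarith

theorem exists_signedForm_insert_insert_ge_of_adj {s : Finset V} {u v : V} {c : V → ℤ}
    (hv : v ∉ s) (hu : u ∉ insert v s) (huv : G.Adj u v) (hc : ∀ v, c v = 1 ∨ c v = -1) :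
    ∃ c' : V → ℤ, (∀ v, c' v = 1 ∨ c' v = -1) ∧
      signedForm G σ s c + 2 ≤ signedForm G σ (insert u (insert v s)) c' := by
  obtain ⟨ε, hε, hεT⟩ := Int.exists_sign_mul_eq_abs
    (∑ y ∈ s, (signedAdj G σ u y + signedAdj G σ u v * signedAdj G σ v y) * c y)
  -- `c'` satisfies `uv`, and the sign `ε` of the rest makes the edges leaving `{u, v}` count `≥ 0`.
  set c' := Function.update (Function.update (ε • c) v (signedAdj G σ u v)) u 1
  have huv' : u ≠ v := huv.ne
  have hoff : ∀ y ∈ s, c' y = ε * c y := fun y hy => by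
    have := ne_of_mem_of_not_mem hy hv
    have := ne_of_mem_of_not_mem hy (fun h => hu (mem_insert_of_mem h))
    simp [c', *]
  have hε2 : ε * ε = 1 := by rcases hε with rfl | rfl <;> norm_num
  refine ⟨c', fun x => ?_, ?_⟩
  · by_cases hxu : x = u
    · simp [c', hxu]
    by_cases hxv : x = v
    · simp only [c', hxv, Function.update_of_ne huv'.symm, Function.update_self, signedAdj]
      split_ifs <;> simp
    · rcases hε with rfl | rfl <;> rcases hc x with h | h <;> simp [c', hxu, hxv, h]
  have hcu : c' u = 1 := Function.update_self ..
  have hcv : c' v = signedAdj G σ u v := by simp [c', huv'.symm]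
  have hrow : ∀ x, ∑ y ∈ s, signedAdj G σ x y * c' y = ε * ∑ y ∈ s, signedAdj G σ x y * c y :=
    fun x => by rw [mul_sum]; exact sum_congr rfl fun y hy => by rw [hoff y hy]; ring
  have hsplit : ∑ y ∈ s, (signedAdj G σ u y + signedAdj G σ u v * signedAdj G σ v y) * c y =
      ∑ y ∈ s, signedAdj G σ u y * c y + signedAdj G σ u v * ∑ y ∈ s, signedAdj G σ v y * c y := by
    rw [mul_sum, ← sum_add_distrib]
    exact sum_congr rfl fun y _ => by ring
  have hform : signedForm G σ (insert u (insert v s)) c' = signedForm G σ s c + 2 + 2 *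
      |∑ y ∈ s, (signedAdj G σ u y + signedAdj G σ u v * signedAdj G σ v y) * c y| := by
    rw [signedForm_insert hu, signedForm_insert hv, sum_insert hv, signedForm_congr hε2 hoff,
      hrow, hrow, hcu, hcv, ← hεT, hsplit]
    linear_combination 2 * signedAdj_mul_self (σ := σ) huv
  rw [hform]
  linarith [abs_nonneg (∑ y ∈ s,
    (signedAdj G σ u y + signedAdj G σ u v * signedAdj G σ v y) * c y)]

theorem two_mul_card_filter_edgeFinset [Fintype V] (P : Sym2 V → Prop) [DecidablePred P] :
    2 * #{e ∈ G.edgeFinset | P e} = #{xy : V × V | G.Adj xy.1 xy.2 ∧ P s(xy.1, xy.2)} := by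
  have hedges : (G.deleteEdges {e | ¬ P e}).edgeFinset = {e ∈ G.edgeFinset | P e} := by
    ext e
    simp [edgeSet_deleteEdges]
  rw [← hedges, two_mul_card_edgeFinset]
  simp

theorem signedForm_univ [Fintype V] {c : V → ℤ} (hc : ∀ v, c v = 1 ∨ c v = -1) :
    signedForm G σ univ c = 4 * #{e ∈ G.edgeFinset |
      ∀ u v, e = s(u, v) → ((c u = c v) ↔ σ e = true)} - 2 * #G.edgeFinset := by
  have hterm : ∀ x y, signedAdj G σ x y * c x * c y =
      2 * (if G.Adj x y ∧ ∀ u v, s(x, y) = s(u, v) → (c u = c v ↔ σ s(x, y) = true) then 1 else 0)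
        - if G.Adj x y then 1 else 0 := by
    intro x y
    simp only [Sym2.forall_mk_eq_imp_iff (r := fun u v => (c u = c v ↔ σ s(x, y) = true))
      fun u v h => by rwa [eq_comm]]
    unfold signedAdj
    split_ifs <;> rcases hc x with hx | hx <;> rcases hc y with hy | hy <;> simp_all
  simp only [signedForm, hterm, sum_sub_distrib, ← mul_sum]
  rw [← Fintype.sum_prod_type' (f := fun x y => if G.Adj x y ∧ _ then (1 : ℤ) else 0),
    ← Fintype.sum_prod_type' (f := fun x y => if G.Adj x y then (1 : ℤ) else 0), sum_boole,
    sum_boole]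
  have hE : 2 * #G.edgeFinset = #{xy : V × V | G.Adj xy.1 xy.2} := G.two_mul_card_edgeFinset
  have hsat := two_mul_card_filter_edgeFinset (G := G)
    fun e => ∀ u v, e = s(u, v) → ((c u = c v) ↔ σ e = true)
  rw [← hE, ← hsat]
  push_cast
  ring

theorem exists_signing_card_sub_one_le_signedForm (s : Finset V) (hs : (G.induce ↑s).Connected) :
    ∃ c : V → ℤ, (∀ v, c v = 1 ∨ c v = -1) ∧ (#s : ℤ) - 1 ≤ signedForm G σ s c := by
  induction s using Finset.strongInduction with
  | H s ih =>
  obtain ⟨⟨b, hb⟩⟩ := hs.nonempty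
  by_cases h2 : 2 ≤ #s
  swap
  · obtain rfl : s = {b} :=
      eq_singleton_iff_unique_mem.2 ⟨hb, fun x hx => card_le_one.1 (by omega) x hx b hb⟩
    exact ⟨fun _ => 1, fun _ => .inl rfl, by simp [signedForm]⟩
  rcases ExistsReduction.of_induce_connected s hs h2 b hb with
    ⟨w, hws, -, hconn, hodd⟩ | ⟨u, hus, v, hvs, -, -, huv, hconn⟩
  · obtain ⟨c, hc, hle⟩ := ih _ (erase_ssubset hws) hconn
    obtain ⟨c', hc', hle'⟩ := exists_signedForm_insert_ge_of_odd (σ := σ) (notMem_erase w s) hc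
      (by rwa [filter_erase, erase_eq_of_notMem (by simp)])
    rw [insert_erase hws] at hle'
    rw [card_erase_of_mem hws, Nat.cast_sub (card_pos.2 ⟨w, hws⟩)] at hle
    exact ⟨c', hc', by push_cast at hle; linarith⟩
  · have hvu : v ∈ s.erase u := mem_erase.2 ⟨huv.ne.symm, hvs⟩
    obtain ⟨c, hc, hle⟩ := ih _ ((erase_ssubset hvu).trans (erase_ssubset hus)) hconn
    obtain ⟨c', hc', hle'⟩ := exists_signedForm_insert_insert_ge_of_adj (σ := σ)
      (s := (s.erase u).erase v) (notMem_erase v _) (by simp [huv.ne]) huv hc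
    rw [insert_erase hvu, insert_erase hus] at hle'
    rw [card_erase_of_mem hvu, card_erase_of_mem hus] at hle
    refine ⟨c', hc', ?_⟩
    have : (↑(#s - 1 - 1) : ℤ) = #s - 2 := by omega
    linarith

end SimpleGraph

/-- Balanced subgraph generalization of the Edwards–Erdős bound: for any labeling of
the edges of a connected graph by `=`/`≠` (here `true`/`false`), some 2-coloring
satisfies at least `m/2 + (n-1)/4` edges. -/
theorem stmt13 {V : Type*} [Fintype V] (G : SimpleGraph V) (hG : G.Connected)
    (σ : Sym2 V → Bool) :
    ∃ c : V → ℤ, (∀ v, c v = 1 ∨ c v = -1) ∧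
      (G.edgeFinset.card : ℝ) / 2 + ((Fintype.card V : ℝ) - 1) / 4
        ≤ ((G.edgeFinset.filter fun e =>
              ∀ u v : V, e = s(u, v) → ((c u = c v) ↔ σ e = true)).card : ℝ) := by
  have hconn : (G.induce ↑(Finset.univ : Finset V)).Connected := by
    rw [Finset.coe_univ]
    exact G.induceUnivIso.connected_iff.2 hG
  obtain ⟨c, hc, hle⟩ := G.exists_signing_card_sub_one_le_signedForm (σ := σ) _ hconn
  rw [SimpleGraph.signedForm_univ hc, Finset.card_univ] at hle
  refine ⟨c, hc, ?_⟩
  have hle' := (Int.cast_le (R := ℝ)).2 hle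
  push_cast at hle'
  linarith
end

section
/- Let S be a system of equations ∏_{i∈I_j} x_i = b_j over x ∈ {-1,1}^n with weights w_j, let A be the m×n matrix over 𝔽₂ with a_{ji} = 1 iff i ∈ I_j, let t = rank A, and suppose columns i_1,...,i_t of A are linearly independent. Let S' be the system obtained by deleting all variables not in {x_{i_1},...,x_{i_t}} from the equations of S (i.e., replacing each I_j by I_j ∩ {i_1,...,i_t}). Then the maximum excess of S' equals the maximum excess of S. -/
/-!
Encode a sign vector `x ∈ {±1}ⁿ` as `x = (-1)^z` with `z ∈ 𝔽₂ⁿ`; then `∏_{i ∈ I_j} x_i = (-1)^{(A z)_j}`,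
so the excess only depends on `A z`. Since the chosen columns are independent and there are
`rank A` of them, they span the column space of `A`, so `A z = A z'` for some `z'` supported on
them. Thus every value of the excess of the original system is attained by the reduced one;
conversely, set the deleted variables to `1`.
-/

open scoped Classical BigOperators

open Finset Submodule

lemma AddChar.map_sum_eq_prod {A M ι : Type*} [AddCommMonoid A] [CommMonoid M]
    (ψ : AddChar A M) (s : Finset ι) (f : ι → A) : ψ (∑ i ∈ s, f i) = ∏ i ∈ s, ψ (f i) := by
  induction s using Finset.induction_on with
  | empty => simp
  | insert a s ha ih => rw [sum_insert ha, prod_insert ha, ψ.map_add_eq_mul, ih]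

lemma span_range_comp_eq_of_linearIndependent {K V ι κ : Type*} [DivisionRing K]
    [AddCommGroup V] [Module K V] [Finite ι] [Fintype κ] {v : ι → V} (f : κ → ι)
    (hli : LinearIndependent K (v ∘ f))
    (hrank : Module.finrank K (span K (Set.range v)) = Fintype.card κ) :
    span K (Set.range (v ∘ f)) = span K (Set.range v) :=
  haveI := FiniteDimensional.span_of_finite K (Set.finite_range v)
  eq_of_le_of_finrank_le (span_mono (Set.range_comp_subset_range f v))
    (by rw [hrank, finrank_span_eq_card hli])

noncomputable def signChar : AddChar (ZMod 2) ℝ :=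
  AddChar.zmodChar 2 (by norm_num : (-1 : ℝ) ^ 2 = 1)

lemma signChar_one : signChar 1 = -1 := by
  norm_num [signChar, AddChar.zmodChar_apply, ZMod.val_one]

lemma signChar_eq_one_or_neg_one (a : ZMod 2) : signChar a = 1 ∨ signChar a = -1 := by
  fin_cases a
  · exact .inl signChar.map_zero_eq_one
  · exact .inr signChar_one

lemma exists_signChar_eq {s : ℝ} (hs : s = 1 ∨ s = -1) : ∃ a, signChar a = s := by
  rcases hs with rfl | rfl
  · exact ⟨0, signChar.map_zero_eq_one⟩
  · exact ⟨1, signChar_one⟩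

section IncidenceSystem

variable {ι κ : Type*} [DecidableEq ι] (I : κ → Finset ι)

def incidenceCol (R : Type*) [Zero R] [One R] (i : ι) : κ → R :=
  fun j => if i ∈ I j then 1 else 0

lemma sum_smul_incidenceCol_apply {R : Type*} [Semiring R] (s : Finset ι) (z : ι → R) (j : κ) :
    (∑ i ∈ s, z i • incidenceCol I R i) j = ∑ i ∈ I j ∩ s, z i := by
  simp only [Finset.sum_apply, Pi.smul_apply, smul_eq_mul, incidenceCol, mul_ite, mul_one,
    mul_zero]
  rw [← sum_filter, filter_mem_eq_inter, inter_comm]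

def excessValues [Fintype κ] (a : κ → ℝ) : Set ℝ :=
  {y | ∃ x : ι → ℝ, (∀ i, x i = 1 ∨ x i = -1) ∧ y = ∑ j, a j * ∏ i ∈ I j, x i}

variable [Fintype ι] {I} {S : Finset ι}

lemma exists_sum_inter_eq_sum_of_mem_span
    (hspan : ∀ i, incidenceCol I (ZMod 2) i ∈ span (ZMod 2) (incidenceCol I (ZMod 2) '' S))
    (z : ι → ZMod 2) : ∃ z' : ι → ZMod 2, ∀ j, ∑ i ∈ I j ∩ S, z' i = ∑ i ∈ I j, z i := by
  have hmem : ∑ i, z i • incidenceCol I (ZMod 2) i ∈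
      span (ZMod 2) (incidenceCol I (ZMod 2) '' S) :=
    sum_smul_mem _ z fun i _ => hspan i
  obtain ⟨z', hz'⟩ := (mem_span_image_finset_iff_exists_fun' (ZMod 2)).mp hmem
  refine ⟨z', fun j => ?_⟩
  have := congrFun hz' j
  rwa [sum_smul_incidenceCol_apply, sum_smul_incidenceCol_apply, inter_univ] at this

lemma exists_sign_prod_inter_eq_prod
    (hspan : ∀ i, incidenceCol I (ZMod 2) i ∈ span (ZMod 2) (incidenceCol I (ZMod 2) '' S))
    {x : ι → ℝ} (hx : ∀ i, x i = 1 ∨ x i = -1) :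
    ∃ x' : ι → ℝ, (∀ i, x' i = 1 ∨ x' i = -1) ∧
      ∀ j, ∏ i ∈ I j ∩ S, x' i = ∏ i ∈ I j, x i := by
  choose z hz using fun i => exists_signChar_eq (hx i)
  obtain ⟨z', hz'⟩ := exists_sum_inter_eq_sum_of_mem_span hspan z
  refine ⟨fun i => signChar (z' i), fun i => signChar_eq_one_or_neg_one _, fun j => ?_⟩
  simp only [← hz, ← AddChar.map_sum_eq_prod, hz']

lemma excessValues_inter_eq [Fintype κ]
    (hspan : ∀ i, incidenceCol I (ZMod 2) i ∈ span (ZMod 2) (incidenceCol I (ZMod 2) '' S))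
    (a : κ → ℝ) : excessValues (fun j => I j ∩ S) a = excessValues I a := by
  ext y
  constructor
  · rintro ⟨x, hx, rfl⟩
    refine ⟨S.piecewise x 1, fun i => ?_, ?_⟩
    · by_cases hi : i ∈ S <;> simp [hi, hx i]
    · simp [prod_piecewise]
  · rintro ⟨x, hx, rfl⟩
    obtain ⟨x', hx', hprod⟩ := exists_sign_prod_inter_eq_prod hspan hx
    exact ⟨x', hx', by simp only [hprod]⟩

end IncidenceSystem

theorem stmt17_general (n m t : ℕ) (I : Fin m → Finset (Fin n)) (b w : Fin m → ℝ)
    (c : Fin t → Fin n)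
    (hli : LinearIndependent (ZMod 2)
      (fun l : Fin t => fun j : Fin m => if c l ∈ I j then (1 : ZMod 2) else 0))
    (hrank : (Matrix.of fun (j : Fin m) (i : Fin n) =>
        if i ∈ I j then (1 : ZMod 2) else 0).rank = t) :
    sSup {y : ℝ | ∃ x : Fin n → ℝ, (∀ i, x i = 1 ∨ x i = -1) ∧
        y = ∑ j, w j * b j * ∏ i ∈ I j ∩ Finset.image c Finset.univ, x i}
      = sSup {y : ℝ | ∃ x : Fin n → ℝ, (∀ i, x i = 1 ∨ x i = -1) ∧
        y = ∑ j, w j * b j * ∏ i ∈ I j, x i} := by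
  have hcols : span (ZMod 2) (Set.range (incidenceCol I (ZMod 2) ∘ c)) =
      span (ZMod 2) (Set.range (incidenceCol I (ZMod 2))) :=
    span_range_comp_eq_of_linearIndependent c hli
      (by rw [Fintype.card_fin, ← hrank, Matrix.rank_eq_finrank_span_cols]; rfl)
  have hspan : ∀ i, incidenceCol I (ZMod 2) i ∈
      span (ZMod 2) (incidenceCol I (ZMod 2) '' ↑(image c univ)) := by
    intro i
    rw [coe_image, coe_univ, Set.image_univ, ← Set.range_comp, hcols]
    exact subset_span ⟨i, rfl⟩
  exact congrArg sSup (excessValues_inter_eq hspan fun j => w j * b j)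

/-- Correctness of Reduction Rule 2: deleting all variables outside a maximal set of
linearly independent columns does not change the maximum excess. -/
theorem stmt17 (n m t : ℕ) (I : Fin m → Finset (Fin n)) (b w : Fin m → ℝ)
    (hb : ∀ j, b j = 1 ∨ b j = -1) (hw : ∀ j, 0 < w j)
    (c : Fin t → Fin n) (hc : Function.Injective c)
    (hli : LinearIndependent (ZMod 2)
      (fun l : Fin t => fun j : Fin m => if c l ∈ I j then (1 : ZMod 2) else 0))
    (hrank : (Matrix.of fun (j : Fin m) (i : Fin n) =>
        if i ∈ I j then (1 : ZMod 2) else 0).rank = t) :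
    sSup {y : ℝ | ∃ x : Fin n → ℝ, (∀ i, x i = 1 ∨ x i = -1) ∧
        y = ∑ j, w j * b j * ∏ i ∈ I j ∩ Finset.image c Finset.univ, x i}
      = sSup {y : ℝ | ∃ x : Fin n → ℝ, (∀ i, x i = 1 ∨ x i = -1) ∧
        y = ∑ j, w j * b j * ∏ i ∈ I j, x i} :=
  stmt17_general n m t I b w c hli hrank
end
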